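/- arXiv:2204.06090 — 4 statements merged into one kernel-verified Lean document; each statement's English description precedes it below -/
import Mathlib

section
/- (Orthogonality of Krawtchouk polynomials) For all integers 0 ≤ j, k ≤ n, (1/2^n) · Σ_{i=0}^{n} C(n,i) · K_j(i;n) · K_k(i;n) = C(n,j) · δ_{jk}, where δ is the Kronecker delta. -/
open Finset

/-- Integer binomial coefficient with convention C(a,b)=0 unless 0 ≤ b ≤ a. -/
def intChoose (a b : ℤ) : ℤ :=
  if 0 ≤ a ∧ 0 ≤ b then (a.toNat.choose b.toNat : ℤ) else 0

/-- Krawtchouk polynomial K_j(i;n) = Σ_{k=0}^{j} (-1)^k C(i,k) C(n-i,j-k),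
with the convention K_j(i;n)=0 if j ∉ [0,n] or i ∉ [0,n]. -/
def kraw (n : ℕ) (j i : ℤ) : ℤ :=
  ∑ k ∈ Finset.range (j.toNat + 1),
    (-1) ^ k * intChoose i k * intChoose ((n : ℤ) - i) (j - k)

/-! The `j`-th Krawtchouk value `K_j(i;n)` is the coefficient of `y^j` in
`G_i(y) = (1 - y)^i (1 + y)^(n - i)`. Since `(1 - y)(1 - z) + (1 + y)(1 + z) = 2 (1 + y z)`,
the binomial theorem gives `∑_i C(n,i) G_i(y) G_i(z) = 2^n (1 + y z)^n`, and comparing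
coefficients of `y^j z^k` on both sides is the orthogonality relation. -/

open Polynomial

theorem Polynomial.coeff_one_add_C_mul_X_pow {R : Type*} [CommSemiring R] (r : R) (n k : ℕ) :
    ((1 + C r * X) ^ n).coeff k = n.choose k * r ^ k := by
  have : (1 + C r * X) ^ n = ((1 + X) ^ n).comp (C r * X) := by
    simp only [pow_comp, add_comp, one_comp, X_comp]
  rw [this, comp_C_mul_X_coeff, coeff_one_add_X_pow]

theorem Polynomial.coeff_coeff_map_C_mul_C {R : Type*} [Semiring R] (p q : R[X]) (j k : ℕ) :
    ((p.map C * C q).coeff j).coeff k = p.coeff j * q.coeff k := by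
  rw [coeff_mul_C, coeff_map, coeff_C_mul]

noncomputable def krawGenPoly (n i : ℕ) : ℤ[X] :=
  (1 - X) ^ i * (1 + X) ^ (n - i)

theorem kraw_eq_coeff_krawGenPoly {n i : ℕ} (hi : i ≤ n) (j : ℕ) :
    kraw n j i = (krawGenPoly n i).coeff j := by
  have hneg : (1 - X : ℤ[X]) = 1 + C (-1) * X := by simp [sub_eq_add_neg]
  rw [krawGenPoly, coeff_mul, Finset.Nat.sum_antidiagonal_eq_sum_range_succ_mk, kraw,
    Int.toNat_natCast]
  refine Finset.sum_congr rfl fun m hm => ?_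
  have hmj : m ≤ j := Finset.mem_range_succ_iff.mp hm
  rw [hneg, coeff_one_add_C_mul_X_pow, coeff_one_add_X_pow, intChoose, intChoose,
    if_pos (by omega), if_pos (by omega)]
  have hni : ((n : ℤ) - i).toNat = n - i := by omega
  have hjm : ((j : ℤ) - m).toNat = j - m := by omega
  simp only [Int.toNat_natCast, hni, hjm]
  ring

-- `y` is the outer variable `X` of `ℤ[X][X]` and `z` the inner one, `C X`.
theorem sum_choose_mul_krawGenPoly (n : ℕ) :
    ∑ i ∈ range (n + 1),
        (krawGenPoly n i).map C * C (krawGenPoly n i) * (n.choose i : ℤ[X][X]) =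
      C (2 ^ n) * (1 + C X * X) ^ n := by
  have hsplit : (C 2 * (1 + C X * X) : ℤ[X][X]) =
      (1 - X) * C (1 - X) + (1 + X) * C (1 + X) := by
    simp only [map_sub, map_add, map_one, map_ofNat]
    ring
  rw [C_pow, ← mul_pow, hsplit, add_pow]
  refine Finset.sum_congr rfl fun i _ => ?_
  simp only [krawGenPoly, Polynomial.map_mul, Polynomial.map_pow, Polynomial.map_sub,
    Polynomial.map_add, Polynomial.map_one, Polynomial.map_X, map_mul, map_pow, mul_pow]
  ring

theorem sum_choose_mul_kraw_mul_kraw (n j k : ℕ) :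
    ∑ i ∈ range (n + 1), (n.choose i : ℤ) * kraw n j i * kraw n k i =
      2 ^ n * n.choose j * if j = k then 1 else 0 := by
  have hcoeff := congrArg (fun P : ℤ[X][X] => (P.coeff j).coeff k) (sum_choose_mul_krawGenPoly n)
  simp only [finsetSum_coeff, coeff_mul_natCast, coeff_coeff_map_C_mul_C, coeff_C_mul,
    coeff_one_add_C_mul_X_pow] at hcoeff
  rw [show (2 ^ n * ((n.choose j : ℤ[X]) * X ^ j)) = C (2 ^ n * (n.choose j : ℤ)) * X ^ j by
      simp [mul_assoc], coeff_C_mul_X_pow] at hcoeff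
  simp only [mul_ite, mul_one, mul_zero, @eq_comm _ j k, ← hcoeff]
  refine Finset.sum_congr rfl fun i hi => ?_
  have hin : i ≤ n := Finset.mem_range_succ_iff.mp hi
  rw [kraw_eq_coeff_krawGenPoly hin, kraw_eq_coeff_krawGenPoly hin]
  ring

theorem krawtchouk_orthogonality_general (n j k : ℕ) :
    (1 / 2 ^ n : ℚ) *
      ∑ i ∈ Finset.range (n + 1),
        (n.choose i : ℚ) * (kraw n j i : ℚ) * (kraw n k i : ℚ) =
      (n.choose j : ℚ) * (if j = k then 1 else 0) := by
  have hsum := congrArg (fun z : ℤ => (z : ℚ)) (sum_choose_mul_kraw_mul_kraw n j k)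
  push_cast at hsum
  rw [hsum]
  field_simp

/-- Orthogonality of the Krawtchouk polynomials:
(1/2^n) Σ_{i=0}^{n} C(n,i) K_j(i;n) K_k(i;n) = C(n,j) δ_{jk}. -/
theorem krawtchouk_orthogonality (n j k : ℕ) (hj : j ≤ n) (hk : k ≤ n) :
    (1 / 2 ^ n : ℚ) *
      ∑ i ∈ Finset.range (n + 1),
        (n.choose i : ℚ) * (kraw n j i : ℚ) * (kraw n k i : ℚ) =
      (n.choose j : ℚ) * (if j = k then 1 else 0) :=
  krawtchouk_orthogonality_general n j k
end

section
/- The (n+1)×(n+1) Krawtchouk matrix K with entries K_{ji} = K_j(i;n) satisfies K² = 2^n · I; in particular K is non-singular. -/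
open Finset

/-! Column `i` of `K` lists the coefficients of `(1 - x)^i (1 + x)^(n - i)`. Homogenized, this
says that `K` is the matrix of the substitution `f(z, y) ↦ f(y - z, y + z)` on binary forms of
degree `n` in the basis `z^i y^(n - i)`. Performing the substitution twice gives
`f(2z, 2y) = 2^n f(z, y)`. -/

open Polynomial

theorem Polynomial.coeff_one_sub_X_pow (R : Type*) [CommRing R] (m k : ℕ) :
    ((1 - X : R[X]) ^ m).coeff k = (-1) ^ k * m.choose k := by
  have : (1 - X : R[X]) ^ m = ((1 + X) ^ m).comp (C (-1) * X) := by simp [sub_eq_add_neg]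
  rw [this, comp_C_mul_X_coeff, coeff_one_add_X_pow, mul_comm]

theorem Polynomial.aeval_homogenize {R A : Type*} [CommSemiring R] [CommSemiring A] [Algebra R A]
    (p : R[X]) (n : ℕ) (g : Fin 2 → A) :
    MvPolynomial.aeval g (p.homogenize n) =
      ∑ k ∈ range (n + 1), p.coeff k • (g 0 ^ k * g 1 ^ (n - k)) := by
  rw [homogenize, map_sum, Nat.sum_antidiagonal_eq_sum_range_succ_mk]
  refine sum_congr rfl fun k _ => ?_
  simp [MvPolynomial.aeval_monomial, Finsupp.prod_fintype, Algebra.smul_def]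

namespace Krawtchouk

variable (R : Type*) [CommRing R]

noncomputable def genPoly (n i : ℕ) : R[X] := (1 - X) ^ i * (1 + X) ^ (n - i)

theorem kraw_eq_coeff_genPoly {n i : ℕ} (hi : i ≤ n) (j : ℕ) :
    kraw n j i = (genPoly ℤ n i).coeff j := by
  rw [kraw, genPoly, coeff_mul, Nat.sum_antidiagonal_eq_sum_range_succ_mk, Int.toNat_natCast]
  refine sum_congr rfl fun k hk => ?_
  have hkj : k ≤ j := Nat.lt_succ_iff.mp (mem_range.mp hk)
  rw [coeff_one_sub_X_pow, coeff_one_add_X_pow, intChoose, intChoose,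
    if_pos ⟨by omega, by omega⟩, if_pos ⟨by omega, by omega⟩]
  simp only [Int.toNat_natCast, show ((n : ℤ) - i).toNat = n - i by omega,
    show ((j : ℤ) - k).toNat = j - k by omega]

theorem homogenize_genPoly {n i : ℕ} (hi : i ≤ n) :
    (genPoly R n i).homogenize n =
      (MvPolynomial.X 1 - MvPolynomial.X 0) ^ i *
        (MvPolynomial.X 1 + MvPolynomial.X 0) ^ (n - i) := by
  apply homogenize_eq_of_isHomogeneous
  · have hX (k : Fin 2) := MvPolynomial.isHomogeneous_X R k
    have h := (((hX 1).sub (hX 0)).pow i).mul (((hX 1).add (hX 0)).pow (n - i))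
    rwa [one_mul, one_mul, Nat.add_sub_cancel' hi] at h
  · simp [genPoly]

theorem sum_coeff_smul_genPoly {n i : ℕ} (hi : i ≤ n) :
    ∑ l ∈ range (n + 1), (genPoly R n i).coeff l • genPoly R n l = C (2 ^ n) * X ^ i := by
  have := aeval_homogenize (genPoly R n i) n ![(1 - X : R[X]), 1 + X]
  rw [homogenize_genPoly R hi] at this
  simp only [map_mul, map_pow, map_sub, map_add, MvPolynomial.aeval_X, Matrix.cons_val_zero,
    Matrix.cons_val_one] at this
  change ∑ l ∈ range (n + 1), (genPoly R n i).coeff l • ((1 - X) ^ l * (1 + X) ^ (n - l)) = _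
  rw [← this]
  obtain ⟨m, rfl⟩ := Nat.exists_eq_add_of_le hi
  rw [Nat.add_sub_cancel_left, C_pow, C_ofNat]
  ring

theorem sum_kraw_mul_kraw {n i : ℕ} (hi : i ≤ n) (j : ℕ) :
    ∑ l ∈ range (n + 1), kraw n j l * kraw n l i = if j = i then 2 ^ n else 0 := by
  calc _ = (∑ l ∈ range (n + 1), (genPoly ℤ n i).coeff l • genPoly ℤ n l).coeff j := by
        rw [finsetSum_coeff]
        refine sum_congr rfl fun l hl => ?_
        rw [kraw_eq_coeff_genPoly (Nat.lt_succ_iff.mp (mem_range.mp hl)),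
          kraw_eq_coeff_genPoly hi, coeff_smul, smul_eq_mul, mul_comm]
    _ = _ := by rw [sum_coeff_smul_genPoly ℤ hi, coeff_C_mul_X_pow]

end Krawtchouk

/-- The (n+1)×(n+1) Krawtchouk matrix K with entries K_{ji} = K_j(i;n) satisfies
K² = 2^n · I; in particular K is non-singular. -/
theorem krawtchouk_matrix_sq (n : ℕ) :
    (Matrix.of fun j i : Fin (n + 1) => kraw n (j : ℕ) (i : ℕ)) *
        (Matrix.of fun j i : Fin (n + 1) => kraw n (j : ℕ) (i : ℕ)) =
      (2 ^ n : ℤ) • (1 : Matrix (Fin (n + 1)) (Fin (n + 1)) ℤ) ∧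
    (Matrix.of fun j i : Fin (n + 1) => kraw n (j : ℕ) (i : ℕ)).det ≠ 0 := by
  set K := Matrix.of fun j i : Fin (n + 1) => kraw n (j : ℕ) (i : ℕ)
  have hsq : K * K = (2 ^ n : ℤ) • 1 := by
    ext j i
    simp only [K, Matrix.mul_apply, Matrix.of_apply]
    rw [Fin.sum_univ_eq_sum_range (fun l => kraw n j l * kraw n l i),
      Krawtchouk.sum_kraw_mul_kraw i.is_le]
    simp [Matrix.one_apply, Fin.ext_iff]
  refine ⟨hsq, fun hdet => ?_⟩
  have h := congrArg Matrix.det hsq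
  rw [Matrix.det_mul, hdet, zero_mul, Matrix.det_smul, Matrix.det_one, mul_one] at h
  exact absurd h.symm (by positivity)
end

section
/- For n a positive integer, j ∈ [1,n+1], and 0 ≤ i ≤ n, the identity K_j(2⌈i/2⌉; n+1) = K_j(i;n) + K_{n+1−j}(i;n) holds. -/
open Finset

lemma intChoose_natCast (a b : ℕ) : intChoose a b = a.choose b := by
  simp [intChoose]

lemma intChoose_neg_right (a b : ℤ) (h : b < 0) : intChoose a b = 0 := by
  unfold intChoose
  rw [if_neg]
  rintro ⟨_, hb⟩; omega

lemma intChoose_eq_zero_of_lt (a b : ℤ) (h : a < b) : intChoose a b = 0 := by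
  unfold intChoose
  split
  · next hab =>
    rw [Nat.choose_eq_zero_of_lt (by omega)]
    simp
  · rfl

lemma intChoose_pascal (a b : ℤ) (ha : 0 ≤ a) :
    intChoose (a + 1) (b + 1) = intChoose a b + intChoose a (b + 1) := by
  rcases lt_trichotomy b (-1) with h | h | h
  · rw [intChoose_neg_right _ _ (by omega), intChoose_neg_right _ _ (by omega),
      intChoose_neg_right _ _ (by omega)]
    ring
  · subst h
    rw [intChoose_neg_right a (-1) (by omega)]
    norm_num
    simp [intChoose, ha, show (0:ℤ) ≤ a + 1 by omega]
  · have hb : 0 ≤ b := by omega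
    lift a to ℕ using ha
    lift b to ℕ using hb
    rw [show ((a : ℤ) + 1) = ((a + 1 : ℕ) : ℤ) by push_cast; ring,
      show ((b : ℤ) + 1) = ((b + 1 : ℕ) : ℤ) by push_cast; ring,
      intChoose_natCast, intChoose_natCast, intChoose_natCast]
    rw [Nat.choose_succ_succ]
    push_cast; ring

lemma intChoose_symm (a b : ℤ) (ha : 0 ≤ a) :
    intChoose a (a - b) = intChoose a b := by
  rcases lt_trichotomy b 0 with h | h | h
  · rw [intChoose_neg_right _ _ h, intChoose_eq_zero_of_lt _ _ (by omega)]
  · subst h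
    lift a to ℕ using ha
    simp [intChoose]
  · rcases le_or_gt b a with h2 | h2
    · lift a to ℕ using ha
      lift b to ℕ using (le_of_lt h)
      have hba : b ≤ a := by exact_mod_cast h2
      rw [show (a : ℤ) - b = ((a - b : ℕ) : ℤ) by push_cast [hba]; ring,
        intChoose_natCast, intChoose_natCast, Nat.choose_symm hba]
    · rw [intChoose_eq_zero_of_lt _ _ h2, intChoose_neg_right _ _ (by omega)]

/-- Extending the summation range of `kraw` (terms with k > j vanish). -/
lemma kraw_sum (n j : ℕ) (i : ℤ) (N : ℕ) (hN : j + 1 ≤ N) :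
    kraw n j i =
      ∑ k ∈ Finset.range N,
        (-1) ^ k * intChoose i k * intChoose ((n : ℤ) - i) ((j : ℤ) - k) := by
  unfold kraw
  rw [Int.toNat_natCast]
  apply Finset.sum_subset (Finset.range_subset_range.2 hN)
  intro k _ hk
  rw [Finset.mem_range] at hk
  rw [intChoose_neg_right ((n : ℤ) - i) ((j : ℤ) - k) (by push_cast; omega), mul_zero]

/-- Shrinking the summation range (terms with k > i vanish). -/
lemma kraw_shrink (n : ℕ) (i : ℕ) (j : ℤ) (N : ℕ) (hN : i + 1 ≤ N) :
    ∑ k ∈ Finset.range N,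
        (-1) ^ k * intChoose (i : ℤ) k * intChoose ((n : ℤ) - i) (j - k) =
      ∑ k ∈ Finset.range (i + 1),
        (-1) ^ k * intChoose (i : ℤ) k * intChoose ((n : ℤ) - i) (j - k) := by
  symm
  apply Finset.sum_subset (Finset.range_subset_range.2 hN)
  intro k _ hk
  rw [Finset.mem_range] at hk
  rw [intChoose_eq_zero_of_lt _ _ (by push_cast; omega), mul_zero, zero_mul]

lemma pascal1 (n i j : ℕ) (hi : i ≤ n) (hj : 1 ≤ j) (hj2 : j ≤ n + 1) :
    kraw (n + 1) j i = kraw n j i + kraw n ((j - 1 : ℕ) : ℤ) i := by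
  rw [kraw_sum (n + 1) j i (n + 2) (by omega), kraw_sum n j i (n + 2) (by omega),
    kraw_sum n (j - 1) i (n + 2) (by omega), ← Finset.sum_add_distrib]
  apply Finset.sum_congr rfl
  intro k _
  have hnn : (0 : ℤ) ≤ (n : ℤ) - i := by push_cast; omega
  have hp := intChoose_pascal ((n : ℤ) - i) ((j : ℤ) - 1 - k) hnn
  have e1 : ((n + 1 : ℕ) : ℤ) - i = ((n : ℤ) - i) + 1 := by push_cast; ring
  have e2 : (j : ℤ) - k = ((j : ℤ) - 1 - k) + 1 := by ring
  have e3 : ((j - 1 : ℕ) : ℤ) - k = (j : ℤ) - 1 - k := by push_cast [hj]; ring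
  rw [e1, e2, hp, e3]
  ring

lemma pascal2 (n i j : ℕ) (hi : i ≤ n) (hj : 1 ≤ j) (hj2 : j ≤ n + 1) :
    kraw (n + 1) j ((i : ℤ) + 1) = kraw n j i - kraw n ((j - 1 : ℕ) : ℤ) i := by
  rw [kraw_sum (n + 1) j _ (n + 2) (by omega), kraw_sum n j _ (n + 2) (by omega),
    kraw_sum n (j - 1) _ (n + 1) (by omega)]
  have key : ∀ k : ℕ, intChoose ((i : ℤ) + 1) k = intChoose i ((k : ℤ) - 1) + intChoose i k := by
    intro k
    have := intChoose_pascal (i : ℤ) ((k : ℤ) - 1) (by positivity)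
    simpa using this
  have hS1 : (∑ k ∈ Finset.range (n + 2),
        (-1) ^ k * intChoose (i : ℤ) ((k : ℤ) - 1) * intChoose ((n : ℤ) - i) ((j : ℤ) - k))
      = -∑ k ∈ Finset.range (n + 1),
          (-1) ^ k * intChoose (i : ℤ) k * intChoose ((n : ℤ) - i) (((j - 1 : ℕ) : ℤ) - k) := by
    rw [Finset.sum_range_succ']
    have h0 : ((-1 : ℤ)) ^ (0 : ℕ) * intChoose (i : ℤ) (((0 : ℕ) : ℤ) - 1) *
        intChoose ((n : ℤ) - i) ((j : ℤ) - ((0 : ℕ) : ℤ)) = 0 := by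
      rw [intChoose_neg_right (i : ℤ) (((0 : ℕ) : ℤ) - 1) (by norm_num)]
      ring
    rw [h0, add_zero, ← Finset.sum_neg_distrib]
    apply Finset.sum_congr rfl
    intro k _
    have e2 : ((k + 1 : ℕ) : ℤ) - 1 = (k : ℤ) := by push_cast; ring
    have e3 : (j : ℤ) - ((k + 1 : ℕ) : ℤ) = ((j - 1 : ℕ) : ℤ) - k := by push_cast [hj]; ring
    rw [e2, e3, pow_succ]
    ring
  calc ∑ k ∈ Finset.range (n + 2),
        (-1) ^ k * intChoose ((i : ℤ) + 1) k *
          intChoose (((n + 1 : ℕ) : ℤ) - ((i : ℤ) + 1)) ((j : ℤ) - k)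
      = (∑ k ∈ Finset.range (n + 2),
          (-1) ^ k * intChoose (i : ℤ) ((k : ℤ) - 1) * intChoose ((n : ℤ) - i) ((j : ℤ) - k))
        + ∑ k ∈ Finset.range (n + 2),
          (-1) ^ k * intChoose (i : ℤ) k * intChoose ((n : ℤ) - i) ((j : ℤ) - k) := by
        rw [← Finset.sum_add_distrib]
        apply Finset.sum_congr rfl
        intro k _
        rw [key k, show ((n + 1 : ℕ) : ℤ) - ((i : ℤ) + 1) = (n : ℤ) - i by push_cast; ring]
        ring
    _ = _ := by rw [hS1]; ring

lemma kraw_symm (n i j : ℕ) (hi : i ≤ n) (hj : j ≤ n) :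
    kraw n ((n - j : ℕ) : ℤ) i = (-1) ^ i * kraw n j i := by
  rw [kraw_sum n (n - j) i (n + 1) (by omega), kraw_sum n j i (n + 1) (by omega),
    kraw_shrink n i _ (n + 1) (by omega), kraw_shrink n i _ (n + 1) (by omega),
    Finset.mul_sum, ← Finset.sum_range_reflect]
  apply Finset.sum_congr rfl
  intro k hk
  rw [Finset.mem_range] at hk
  have hki : k ≤ i := by omega
  have e0 : i + 1 - 1 - k = i - k := by omega
  rw [e0]
  have hnn : (0 : ℤ) ≤ (n : ℤ) - i := by push_cast; omega
  have e1 : ((i - k : ℕ) : ℤ) = (i : ℤ) - k := by push_cast [hki]; ring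
  have e2 : intChoose (i : ℤ) ((i : ℤ) - k) = intChoose (i : ℤ) k :=
    intChoose_symm _ _ (by positivity)
  have e3 : ((n - j : ℕ) : ℤ) - ((i : ℤ) - k) = ((n : ℤ) - i) - ((j : ℤ) - k) := by
    push_cast [hj]; ring
  have e4 : intChoose ((n : ℤ) - i) (((n : ℤ) - i) - ((j : ℤ) - k)) =
      intChoose ((n : ℤ) - i) ((j : ℤ) - k) := intChoose_symm _ _ hnn
  have e5 : ((-1 : ℤ)) ^ (i - k) = (-1) ^ i * (-1) ^ k := by
    have h : i + k = (i - k) + 2 * k := by omega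
    have : ((-1 : ℤ)) ^ (i + k) = (-1) ^ (i - k) := by
      rw [h, pow_add, pow_mul]; norm_num
    rw [← this, pow_add]
  rw [e1, e2, e3, e4, e5]
  ring

/-- For n ≥ 1, j ∈ [1,n+1], 0 ≤ i ≤ n:
K_j(2⌈i/2⌉; n+1) = K_j(i;n) + K_{n+1-j}(i;n). -/
theorem krawtchouk_extension_lemma (n i j : ℕ) (hn : 1 ≤ n) (hj1 : 1 ≤ j)
    (hj2 : j ≤ n + 1) (hi : i ≤ n) :
    kraw (n + 1) j ((2 * ((i + 1) / 2) : ℕ) : ℤ) =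
      kraw n j i + kraw n ((n : ℤ) + 1 - j) i := by
  have hsym : kraw n ((n : ℤ) + 1 - j) i = (-1) ^ i * kraw n ((j - 1 : ℕ) : ℤ) i := by
    have e : (n : ℤ) + 1 - j = ((n - (j - 1) : ℕ) : ℤ) := by push_cast [hj1, hj2]; omega
    rw [e, kraw_symm n i (j - 1) hi (by omega)]
  rcases Nat.even_or_odd i with h | h
  · have h2 : 2 * ((i + 1) / 2) = i := by
      obtain ⟨m, rfl⟩ := h; omega
    rw [h2, pascal1 n i j hi hj1 hj2, hsym, h.neg_one_pow]
    ring
  · have h2 : 2 * ((i + 1) / 2) = i + 1 := by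
      obtain ⟨m, rfl⟩ := h; omega
    have e : ((2 * ((i + 1) / 2) : ℕ) : ℤ) = (i : ℤ) + 1 := by rw [h2]; push_cast; ring
    rw [e, pascal2 n i j hi hj1 hj2, hsym, h.neg_one_pow]
    ring
end

section
/- Let n ≥ 1 and d even with 2d > n. The dual solution c given by c_0 = 1, c_1 = (2d−n+1)/((2d−n)(2d−n+2)), c_{n−1} = 1/((2d−n)(2d−n+2)), and c_j = 0 otherwise, is feasible for the dual of the (n,d) Delsarte linear program: all c_j ≥ 0 and Σ_{j=0}^{n} c_j K_j(i;n) ≤ 0 for all i ∈ [d,n]. Moreover its objective value Σ_{j=0}^{n} c_j C(n,j) equals 2d/(2d−n). -/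
open Finset

/-- Feasibility for the (n,d) Delsarte linear program: A_0 = 1, A_i = 0 for
1 ≤ i ≤ d-1, A_i ≥ 0 for i ≤ n, and the Delsarte inequalities
Σ_{i=0}^{n} A_i K_j(i;n) ≥ 0 for all 1 ≤ j ≤ n. -/
def delsarteFeasible (n d : ℕ) (A : ℕ → ℚ) : Prop :=
  A 0 = 1 ∧ (∀ i : ℕ, 1 ≤ i → i ≤ d - 1 → A i = 0) ∧
    (∀ i : ℕ, i ≤ n → 0 ≤ A i) ∧
    ∀ j : ℕ, 1 ≤ j → j ≤ n →
      0 ≤ ∑ i ∈ Finset.range (n + 1), A i * (kraw n j i : ℚ)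

/-- Feasibility for the dual of the (n,d) Delsarte linear program: c_0 = 1,
c_j ≥ 0 for j ≤ n, and Σ_{j=0}^{n} c_j K_j(i;n) ≤ 0 for all d ≤ i ≤ n. -/
def delsarteDualFeasible (n d : ℕ) (c : ℕ → ℚ) : Prop :=
  c 0 = 1 ∧ (∀ j : ℕ, j ≤ n → 0 ≤ c j) ∧
    ∀ i : ℕ, d ≤ i → i ≤ n →
      ∑ j ∈ Finset.range (n + 1), c j * (kraw n j i : ℚ) ≤ 0

lemma intChoose_of_neg_right (a : ℤ) {b : ℤ} (hb : b < 0) : intChoose a b = 0 := by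
  simp [intChoose, hb.not_ge]

lemma intChoose_of_lt {a b : ℤ} (h : a < b) : intChoose a b = 0 := by
  unfold intChoose
  split_ifs with hab
  · exact_mod_cast Nat.choose_eq_zero_of_lt (by omega)
  · rfl

lemma intChoose_sub_one_right (a : ℕ) : intChoose a (a - 1) = a := by
  rcases a with _ | a
  · exact intChoose_of_neg_right _ (by norm_num)
  · rw [Nat.cast_succ, add_sub_cancel_right, ← Nat.cast_succ, intChoose_natCast,
      Nat.choose_succ_self_right]

lemma kraw_eq_sum_range (n j : ℕ) (i : ℤ) {N : ℕ} (hN : j < N) :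
    kraw n j i = ∑ k ∈ range N, (-1) ^ k * intChoose i k * intChoose (n - i) (j - k) := by
  rw [kraw, Int.toNat_natCast]
  refine sum_subset (range_subset_range.2 hN) fun k _ hk => ?_
  rw [intChoose_of_neg_right (n - i) (by simp at hk; omega), mul_zero]

lemma kraw_zero_left {n i : ℕ} (hi : i ≤ n) : kraw n 0 i = 1 := by
  simp [kraw, intChoose, hi]

lemma kraw_one_left {n i : ℕ} (hi : i ≤ n) : kraw n 1 i = n - 2 * i := by
  have h : (n : ℤ) - i = (n - i : ℕ) := by omega
  simp [kraw, sum_range_succ, h, intChoose]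
  omega

lemma kraw_sub_one_left {n i : ℕ} (hn : 1 ≤ n) (hi : i ≤ n) :
    kraw n (n - 1 : ℕ) i = (-1) ^ i * (n - 2 * i) := by
  rw [kraw_eq_sum_range n (n - 1) i (N := n + 1) (by omega)]
  rcases Nat.eq_zero_or_pos i with rfl | hi0
  · rw [sum_eq_single 0 (fun k _ hk => by
      rw [intChoose_of_lt (a := (0 : ℕ)) (b := k) (by omega), mul_zero, zero_mul]) (by simp)]
    simp [intChoose, Nat.choose_symm_of_eq_add (Nat.sub_add_cancel hn).symm]
  obtain ⟨l, rfl⟩ : ∃ l, i = l + 1 := ⟨i - 1, by omega⟩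
  -- a term survives only if `k ≤ i` and `n - 1 - k ≤ n - i`
  rw [← sum_subset (s₁ := {l, l + 1}) (by intro k; simp; omega), sum_pair (by omega)]
  · have hni : (n : ℤ) - (l + 1 : ℕ) = (n - (l + 1) : ℕ) := by omega
    have h₁ : ((n - 1 : ℕ) : ℤ) - l = (n - (l + 1) : ℕ) := by omega
    have h₂ : ((n - 1 : ℕ) : ℤ) - (l + 1 : ℕ) = (n - (l + 1) : ℕ) - 1 := by omega
    rw [hni, h₁, h₂, intChoose_natCast, intChoose_natCast, intChoose_natCast,
      intChoose_sub_one_right, Nat.choose_self, Nat.choose_self, Nat.choose_succ_self_right]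
    push_cast [Nat.cast_sub hi]
    ring
  · intro k _ hk
    simp only [mem_insert, mem_singleton, not_or] at hk
    rcases lt_or_gt_of_ne hk.1 with hlt | hgt
    · rw [intChoose_of_lt (a := n - (l + 1 : ℕ)) (by omega), mul_zero]
    · rw [intChoose_of_lt (a := (l + 1 : ℕ)) (b := k) (by omega), mul_zero, zero_mul]

lemma sum_range_ite_zero_one_sub_one_mul {R : Type*} [NonAssocSemiring R] {n : ℕ} (hn : 1 ≤ n)
    (a b : R) (X : ℕ → R) :
    ∑ j ∈ range (n + 1),
        ((if j = 0 then 1 else 0) + (if j = 1 then a else 0) + (if j = n - 1 then b else 0)) * X j =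
      X 0 + a * X 1 + b * X (n - 1) := by
  simp only [add_mul, sum_add_distrib, ite_mul, one_mul, zero_mul, sum_ite_eq', mem_range]
  simp [show 1 < n + 1 by omega]

def upperHalfDual (n d j : ℕ) : ℚ :=
  (if j = 0 then 1 else 0) +
    (if j = 1 then (2 * (d : ℚ) - n + 1) / ((2 * d - n) * (2 * d - n + 2)) else 0) +
    (if j = n - 1 then 1 / ((2 * (d : ℚ) - n) * (2 * d - n + 2)) else 0)

section upperHalfDual

variable {n d : ℕ}

lemma upperHalfDual_zero (hn : 2 ≤ n) : upperHalfDual n d 0 = 1 := by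
  simp [upperHalfDual, show 0 ≠ n - 1 by omega]

lemma upperHalfDual_nonneg (h2d : n < 2 * d) (j : ℕ) : 0 ≤ upperHalfDual n d j := by
  have hm : (n : ℚ) < 2 * d := by exact_mod_cast h2d
  unfold upperHalfDual
  split_ifs <;> positivity

lemma sum_upperHalfDual_mul_choose (hn : 1 ≤ n) (h2d : n < 2 * d) :
    ∑ j ∈ range (n + 1), upperHalfDual n d j * n.choose j = 2 * d / (2 * d - n) := by
  have hm : (0 : ℚ) < 2 * d - n := by
    have : (n : ℚ) < 2 * d := by exact_mod_cast h2d
    linarith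
  unfold upperHalfDual
  rw [sum_range_ite_zero_one_sub_one_mul hn, Nat.choose_zero_right, Nat.choose_one_right,
    Nat.choose_symm_of_eq_add (Nat.sub_add_cancel hn).symm, Nat.choose_one_right]
  field_simp
  ring

lemma sum_upperHalfDual_mul_kraw_nonpos (hd : Even d) (h2d : n < 2 * d) {i : ℕ} (hdi : d ≤ i)
    (hin : i ≤ n) : ∑ j ∈ range (n + 1), upperHalfDual n d j * (kraw n j i : ℚ) ≤ 0 := by
  have hn : 1 ≤ n := by omega
  have hm : (0 : ℚ) < 2 * d - n := by
    have : (n : ℚ) < 2 * d := by exact_mod_cast h2d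
    linarith
  unfold upperHalfDual
  rw [sum_range_ite_zero_one_sub_one_mul hn, Nat.cast_zero, Nat.cast_one, kraw_zero_left hin,
    kraw_one_left hin, kraw_sub_one_left hn hin]
  push_cast
  have key : (2 * d - n) * (2 * d - n + 2) + (2 * d - n + 1) * (n - 2 * i) +
      (-1) ^ i * (n - 2 * i) ≤ (0 : ℚ) := by
    rcases Nat.even_or_odd i with hi | hi
    · have : (d : ℚ) ≤ i := by exact_mod_cast hdi
      rw [hi.neg_one_pow]
      nlinarith
    · have : (d : ℚ) + 1 ≤ i := by
        exact_mod_cast (hdi.lt_of_ne fun h => Nat.not_odd_iff_even.2 hd (h ▸ hi))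
      rw [hi.neg_one_pow]
      nlinarith
  field_simp
  linarith

end upperHalfDual

theorem upper_half_even_dual_feasible_general (n d : ℕ) (hd : Even d)
    (hdn : d ≤ n) (h2d : n < 2 * d) :
    delsarteDualFeasible n d
      (fun j => (if j = 0 then 1 else 0) +
        (if j = 1 then (2 * (d : ℚ) - n + 1) / ((2 * d - n) * (2 * d - n + 2)) else 0) +
        (if j = n - 1 then 1 / ((2 * (d : ℚ) - n) * (2 * d - n + 2)) else 0)) ∧
    ∑ j ∈ Finset.range (n + 1),
        ((if j = 0 then 1 else 0) +
          (if j = 1 then (2 * (d : ℚ) - n + 1) / ((2 * d - n) * (2 * d - n + 2)) else 0) +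
          (if j = n - 1 then 1 / ((2 * (d : ℚ) - n) * (2 * d - n + 2)) else 0)) *
          (n.choose j : ℚ) =
      2 * d / (2 * d - n) := by
  have hn : 2 ≤ n := by
    obtain ⟨r, rfl⟩ := hd
    omega
  exact ⟨⟨upperHalfDual_zero hn, fun j _ => upperHalfDual_nonneg h2d j,
    fun i hdi hin => sum_upperHalfDual_mul_kraw_nonpos hd h2d hdi hin⟩,
    sum_upperHalfDual_mul_choose (by omega) h2d⟩

/-- For d even with 2d > n (and d ≤ n), the dual solution with c_0 = 1,
c_1 = (2d-n+1)/((2d-n)(2d-n+2)), c_{n-1} = 1/((2d-n)(2d-n+2)), c_j = 0 otherwise,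
is feasible for the dual of the (n,d) Delsarte LP, and its objective value is
2d/(2d-n). -/
theorem upper_half_even_dual_feasible (n d : ℕ) (hn : 1 ≤ n) (hd : Even d)
    (hdn : d ≤ n) (h2d : n < 2 * d) :
    delsarteDualFeasible n d
      (fun j => (if j = 0 then 1 else 0) +
        (if j = 1 then (2 * (d : ℚ) - n + 1) / ((2 * d - n) * (2 * d - n + 2)) else 0) +
        (if j = n - 1 then 1 / ((2 * (d : ℚ) - n) * (2 * d - n + 2)) else 0)) ∧
    ∑ j ∈ Finset.range (n + 1),
        ((if j = 0 then 1 else 0) +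
          (if j = 1 then (2 * (d : ℚ) - n + 1) / ((2 * d - n) * (2 * d - n + 2)) else 0) +
          (if j = n - 1 then 1 / ((2 * (d : ℚ) - n) * (2 * d - n + 2)) else 0)) *
          (n.choose j : ℚ) =
      2 * d / (2 * d - n) :=
  upper_half_even_dual_feasible_general n d hd hdn h2d
end
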